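/- Let G be a graph on n vertices with maximum degree at most Δ ≥ 3 and diameter at most k where k = 2ℓ is even, and suppose (A, S, B) is a separation of order s in G. Then n ≤ (3/2)√s · Δ(Δ−1)^{ℓ−1} + 3s · M(Δ, ℓ−1), where M(Δ, j) is the Moore bound. -/
import Mathlib


/-- The Moore bound `M(Δ, j) = 1 + Δ·∑_{i=0}^{j-1} (Δ−1)^i`: the maximum
possible number of vertices within distance `j` of a fixed vertex in a graph of
maximum degree `Δ`. In particular `M(Δ, 0) = 1`. -/
def mooreBound (Δ j : ℕ) : ℕ :=
  1 + Δ * ∑ i ∈ Finset.range j, (Δ - 1) ^ i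

open Finset SimpleGraph
open scoped Classical

section helpers

set_option linter.unusedSectionVars false

variable {V : Type*} [Fintype V] [DecidableEq V] {G : SimpleGraph V} {Δ : ℕ}

/-- The neighborhood of `v` as a `Finset`, with classical decidability. -/
noncomputable def nbr (G : SimpleGraph V) (v : V) : Finset V :=
  Finset.univ.filter (fun w => G.Adj v w)

lemma mem_nbr {v w : V} : w ∈ nbr G v ↔ G.Adj v w := by simp [nbr]

lemma nbr_card_le (hmax : ∀ v : V, (G.neighborSet v).ncard ≤ Δ) (v : V) :
    (nbr G v).card ≤ Δ := by
  have h : G.neighborSet v = ↑(nbr G v) := by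
    ext w; simp [nbr, SimpleGraph.mem_neighborSet]
  have := hmax v
  rwa [h, Set.ncard_coe_finset] at this

/-- From a vertex at distance `j+1`, one can take a first step along a geodesic. -/
lemma exists_adj_dist (hconn : G.Connected) {s a : V} {j : ℕ} (h : G.dist s a = j + 1) :
    ∃ u, G.Adj s u ∧ G.dist u a = j := by
  obtain ⟨p, hp⟩ := (hconn s a).exists_walk_length_eq_dist
  cases p with
  | nil => rw [h] at hp; simp at hp
  | @cons _ u _ hadj q =>
    refine ⟨u, hadj, ?_⟩
    have h1 : G.dist u a ≤ q.length := SimpleGraph.dist_le q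
    have h2 : G.dist s a ≤ G.dist s u + G.dist u a := hconn.dist_triangle
    have h3 : G.dist s u = 1 := SimpleGraph.dist_eq_one_iff_adj.mpr hadj
    have h4 : q.length + 1 = j + 1 := by
      simpa [SimpleGraph.Walk.length_cons, h] using hp
    omega

/-- Bound on "directed spheres": the number of vertices at distance `j` from `u`
and `j+1` from `s`, where `s ~ u`, is at most `(Δ-1)^j`. -/
lemma sphere2_card (hconn : G.Connected) (hmax : ∀ v : V, (G.neighborSet v).ncard ≤ Δ)
    {s u : V} (hadj : G.Adj s u) (j : ℕ) :
    (Finset.univ.filter (fun x => G.dist u x = j ∧ G.dist s x = j + 1)).card ≤ (Δ - 1) ^ j := by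
  induction j with
  | zero =>
    have hsub : (Finset.univ.filter (fun x => G.dist u x = 0 ∧ G.dist s x = 0 + 1)) ⊆ {u} := by
      intro x hx
      simp only [mem_filter, mem_univ, true_and] at hx
      simp [((hconn.dist_eq_zero_iff).mp hx.1).symm]
    calc _ ≤ ({u} : Finset V).card := Finset.card_le_card hsub
    _ = 1 := by simp
    _ ≤ (Δ - 1) ^ 0 := by simp
  | succ j ih =>
    set P := Finset.univ.filter (fun x => G.dist u x = j ∧ G.dist s x = j + 1) with hP
    have hsub : (Finset.univ.filter (fun x => G.dist u x = j + 1 ∧ G.dist s x = j + 1 + 1)) ⊆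
        P.biUnion (fun w => (nbr G w).filter
          (fun x => G.dist u x = j + 1 ∧ G.dist s x = j + 1 + 1)) := by
      intro x hx
      simp only [mem_filter, mem_univ, true_and] at hx
      obtain ⟨w, hwx, hwu⟩ := exists_adj_dist hconn
        (show G.dist x u = j + 1 by rw [SimpleGraph.dist_comm]; exact hx.1)
      have hdw : G.dist u w = j := by rw [SimpleGraph.dist_comm]; exact hwu
      have hsu : G.dist s u = 1 := SimpleGraph.dist_eq_one_iff_adj.mpr hadj
      have hwx1 : G.dist w x = 1 := SimpleGraph.dist_eq_one_iff_adj.mpr hwx.symm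
      have h1 : G.dist s w ≤ j + 1 := by
        have := hconn.dist_triangle (u := s) (v := u) (w := w)
        omega
      have h2 : j + 1 ≤ G.dist s w := by
        have := hconn.dist_triangle (u := s) (v := w) (w := x)
        omega
      simp only [mem_biUnion]
      exact ⟨w, by simp only [hP, mem_filter, mem_univ, true_and]; omega,
        by simp only [mem_filter, mem_nbr]; exact ⟨hwx.symm, hx.1, hx.2⟩⟩
    have hfib : ∀ w ∈ P, ((nbr G w).filter
        (fun x => G.dist u x = j + 1 ∧ G.dist s x = j + 1 + 1)).card ≤ Δ - 1 := by
      intro w hw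
      simp only [hP, mem_filter, mem_univ, true_and] at hw
      -- find a neighbor of w that is not in the fiber
      obtain ⟨w', hw'mem, hw'not⟩ : ∃ w', w' ∈ nbr G w ∧
          ¬ (G.dist u w' = j + 1 ∧ G.dist s w' = j + 1 + 1) := by
        rcases Nat.eq_zero_or_pos j with hj | hj
        · subst hj
          have : u = w := (hconn.dist_eq_zero_iff).mp hw.1
          subst this
          exact ⟨s, mem_nbr.mpr hadj.symm, fun h => by have := h.2; simp [SimpleGraph.dist_self] at this⟩
        · obtain ⟨i, hi⟩ : ∃ i, j = i + 1 := ⟨j - 1, by omega⟩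
          obtain ⟨w', hww', hw'u⟩ := exists_adj_dist hconn
            (show G.dist w u = i + 1 by rw [SimpleGraph.dist_comm]; omega)
          refine ⟨w', mem_nbr.mpr hww', ?_⟩
          have : G.dist u w' = i := by rw [SimpleGraph.dist_comm]; exact hw'u
          omega
      have hsub2 : ((nbr G w).filter
          (fun x => G.dist u x = j + 1 ∧ G.dist s x = j + 1 + 1)) ⊆ (nbr G w).erase w' := by
        intro x hx
        simp only [mem_filter] at hx
        refine Finset.mem_erase.mpr ⟨?_, hx.1⟩
        rintro rfl; exact hw'not hx.2
      calc _ ≤ ((nbr G w).erase w').card := Finset.card_le_card hsub2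
      _ = (nbr G w).card - 1 := Finset.card_erase_of_mem hw'mem
      _ ≤ Δ - 1 := Nat.sub_le_sub_right (nbr_card_le hmax w) 1
    calc _ ≤ (P.biUnion (fun w => (nbr G w).filter
          (fun x => G.dist u x = j + 1 ∧ G.dist s x = j + 1 + 1))).card :=
        Finset.card_le_card hsub
    _ ≤ ∑ w ∈ P, ((nbr G w).filter
          (fun x => G.dist u x = j + 1 ∧ G.dist s x = j + 1 + 1)).card :=
        Finset.card_biUnion_le
    _ ≤ ∑ _w ∈ P, (Δ - 1) := Finset.sum_le_sum hfib
    _ = P.card * (Δ - 1) := by rw [Finset.sum_const, smul_eq_mul]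
    _ ≤ (Δ - 1) ^ j * (Δ - 1) := Nat.mul_le_mul_right _ ih
    _ = (Δ - 1) ^ (j + 1) := (pow_succ _ _).symm


/-- Sphere bound: at most `Δ(Δ-1)^(j-1)` vertices at distance exactly `j ≥ 1`. -/
lemma sphere_card (hconn : G.Connected) (hmax : ∀ v : V, (G.neighborSet v).ncard ≤ Δ)
    (v : V) {j : ℕ} (hj : 1 ≤ j) :
    (Finset.univ.filter (fun x => G.dist v x = j)).card ≤ Δ * (Δ - 1) ^ (j - 1) := by
  obtain ⟨i, rfl⟩ : ∃ i, j = i + 1 := ⟨j - 1, by omega⟩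
  have hsub : (Finset.univ.filter (fun x => G.dist v x = i + 1)) ⊆
      (nbr G v).biUnion (fun u => Finset.univ.filter
        (fun x => G.dist u x = i ∧ G.dist v x = i + 1)) := by
    intro x hx
    simp only [mem_filter, mem_univ, true_and] at hx
    obtain ⟨u, hvu, hux⟩ := exists_adj_dist hconn hx
    simp only [mem_biUnion, mem_filter, mem_univ, true_and]
    exact ⟨u, mem_nbr.mpr hvu, hux, hx⟩
  calc _ ≤ _ := Finset.card_le_card hsub
  _ ≤ ∑ u ∈ nbr G v, (Finset.univ.filter
        (fun x => G.dist u x = i ∧ G.dist v x = i + 1)).card := Finset.card_biUnion_le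
  _ ≤ ∑ u ∈ nbr G v, (Δ - 1) ^ i :=
      Finset.sum_le_sum (fun u hu => sphere2_card hconn hmax (mem_nbr.mp hu) i)
  _ = (nbr G v).card * (Δ - 1) ^ i := by rw [Finset.sum_const, smul_eq_mul]
  _ ≤ Δ * (Δ - 1) ^ i := Nat.mul_le_mul_right _ (nbr_card_le hmax v)
  _ = Δ * (Δ - 1) ^ (i + 1 - 1) := by simp

/-- Ball bound: at most `mooreBound Δ j` vertices within distance `j`. -/
lemma ball_card (hconn : G.Connected) (hmax : ∀ v : V, (G.neighborSet v).ncard ≤ Δ)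
    (v : V) (j : ℕ) :
    (Finset.univ.filter (fun x => G.dist v x ≤ j)).card ≤ mooreBound Δ j := by
  induction j with
  | zero =>
    have hsub : (Finset.univ.filter (fun x => G.dist v x ≤ 0)) ⊆ {v} := by
      intro x hx
      simp only [mem_filter, mem_univ, true_and, Nat.le_zero] at hx
      simp [((hconn.dist_eq_zero_iff).mp hx).symm]
    calc _ ≤ ({v} : Finset V).card := Finset.card_le_card hsub
    _ ≤ mooreBound Δ 0 := by simp [mooreBound]
  | succ j ih =>
    have hsub : (Finset.univ.filter (fun x => G.dist v x ≤ j + 1)) ⊆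
        (Finset.univ.filter (fun x => G.dist v x ≤ j)) ∪
        (Finset.univ.filter (fun x => G.dist v x = j + 1)) := by
      intro x hx
      simp only [mem_filter, mem_univ, true_and, mem_union] at hx ⊢
      omega
    have hM : mooreBound Δ (j + 1) = mooreBound Δ j + Δ * (Δ - 1) ^ j := by
      simp only [mooreBound, Finset.sum_range_succ]
      ring
    have hsph := sphere_card hconn hmax v (j := j + 1) (by omega)
    simp only [Nat.add_sub_cancel] at hsph
    calc _ ≤ _ := Finset.card_le_card hsub
    _ ≤ (Finset.univ.filter (fun x => G.dist v x ≤ j)).card +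
        (Finset.univ.filter (fun x => G.dist v x = j + 1)).card := Finset.card_union_le _ _
    _ ≤ mooreBound Δ j + Δ * (Δ - 1) ^ j := Nat.add_le_add ih hsph
    _ = mooreBound Δ (j + 1) := hM.symm

/-- Any walk from `A` to `B` passes through `S`, splitting the length. -/
lemma crossing (hconn : G.Connected) {A S B : Finset V}
    (hcover : A ∪ S ∪ B = Finset.univ)
    (hAB : Disjoint A B)
    (hsep : ∀ a ∈ A, ∀ b ∈ B, ¬G.Adj a b) :
    ∀ {a b : V} (p : G.Walk a b), a ∈ A → b ∈ B →
      ∃ x ∈ S, G.dist a x + G.dist x b ≤ p.length := by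
  intro a b p
  induction p with
  | nil =>
    intro ha hb
    exact absurd hb (Finset.disjoint_left.mp hAB ha)
  | @cons a c b h q ih =>
    intro ha hb
    have hc : c ∈ A ∨ c ∈ S ∨ c ∈ B := by
      have := Finset.mem_univ c
      rw [← hcover] at this
      simp only [Finset.mem_union] at this
      tauto
    rcases hc with hc | hc | hc
    · obtain ⟨x, hxS, hx⟩ := ih hc hb
      refine ⟨x, hxS, ?_⟩
      have h1 : G.dist a c = 1 := SimpleGraph.dist_eq_one_iff_adj.mpr h
      have h2 : G.dist a x ≤ G.dist a c + G.dist c x := hconn.dist_triangle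
      simp only [SimpleGraph.Walk.length_cons]
      omega
    · refine ⟨c, hc, ?_⟩
      have h1 : G.dist a c = 1 := SimpleGraph.dist_eq_one_iff_adj.mpr h
      have h2 : G.dist c b ≤ q.length := SimpleGraph.dist_le q
      simp only [SimpleGraph.Walk.length_cons]
      omega
    · exact absurd h (hsep a ha c hc)


/-- Concluding arithmetic when there is no `√s` term needed. -/
lemma conclude0 {n s Δ ℓ : ℕ} (hΔ : 3 ≤ Δ) (h1 : n ≤ 3 * s * mooreBound Δ (ℓ - 1)) :
    (n : ℝ) ≤ 3 / 2 * Real.sqrt s * Δ * ((Δ : ℝ) - 1) ^ (ℓ - 1) + 3 * s * mooreBound Δ (ℓ - 1) := by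
  have hd : (0:ℝ) ≤ (Δ:ℝ) - 1 := by
    have : (3:ℝ) ≤ (Δ:ℝ) := by exact_mod_cast hΔ
    linarith
  have h2 : (0:ℝ) ≤ 3 / 2 * Real.sqrt s * Δ * ((Δ : ℝ) - 1) ^ (ℓ - 1) := by
    have := Real.sqrt_nonneg (s:ℝ)
    positivity
  have h1' : (n:ℝ) ≤ 3 * s * mooreBound Δ (ℓ - 1) := by exact_mod_cast h1
  linarith

/-- Concluding arithmetic with the `√s` term. -/
lemma conclude1 {n s Δ ℓ m : ℕ} (hΔ : 3 ≤ Δ)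
    (h1 : n ≤ 3 * s * mooreBound Δ (ℓ - 1) + 3 * m)
    (h2 : 4 * m ^ 2 ≤ s * (Δ * (Δ - 1) ^ (ℓ - 1)) ^ 2) :
    (n : ℝ) ≤ 3 / 2 * Real.sqrt s * Δ * ((Δ : ℝ) - 1) ^ (ℓ - 1) + 3 * s * mooreBound Δ (ℓ - 1) := by
  set D : ℕ := Δ * (Δ - 1) ^ (ℓ - 1) with hD
  have hc : ((Δ - 1 : ℕ) : ℝ) = (Δ:ℝ) - 1 := by
    have := Nat.cast_sub (R := ℝ) (show 1 ≤ Δ by omega)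
    simpa using this
  have hDcast : (D : ℝ) = (Δ:ℝ) * ((Δ:ℝ) - 1) ^ (ℓ - 1) := by
    rw [hD]
    push_cast [hc]
    ring
  have h2' : ((2*m : ℝ))^2 ≤ (s:ℝ) * (D:ℝ)^2 := by
    have : ((4 * m ^ 2 : ℕ) : ℝ) ≤ ((s * D ^ 2 : ℕ) : ℝ) := by exact_mod_cast h2
    push_cast at this
    nlinarith [this]
  have hsq : (2*(m:ℝ)) ≤ Real.sqrt s * D := by
    have h3 := Real.sqrt_le_sqrt h2'
    rw [Real.sqrt_sq (by positivity), Real.sqrt_mul (by positivity), Real.sqrt_sq (by positivity)] at h3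
    exact h3
  have h1' : (n:ℝ) ≤ 3 * s * mooreBound Δ (ℓ - 1) + 3 * m := by exact_mod_cast h1
  have hrw : 3 / 2 * Real.sqrt ↑s * ↑Δ * ((Δ : ℝ) - 1) ^ (ℓ - 1) = 3 / 2 * (Real.sqrt s * D) := by
    rw [hDcast]; ring
  rw [hrw]
  linarith

end helpers

/-- Let `G` be a graph on `n` vertices with maximum degree at most `Δ ≥ 3` and
diameter at most `k = 2ℓ` even, and suppose `(A, S, B)` is a separation of
order `s` in `G`. Then `n ≤ (3/2)√s · Δ(Δ−1)^{ℓ−1} + 3s · M(Δ, ℓ−1)`. -/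
theorem separation_even_diameter {V : Type*} [Fintype V] [DecidableEq V] (G : SimpleGraph V)
    (Δ k s ℓ : ℕ) (hΔ : 3 ≤ Δ) (hk : k = 2 * ℓ)
    (hmax : ∀ v : V, (G.neighborSet v).ncard ≤ Δ)
    (hconn : G.Connected)
    (hdiam : ∀ u v : V, G.dist u v ≤ k)
    (A S B : Finset V)
    (hcover : A ∪ S ∪ B = Finset.univ)
    (hAS : Disjoint A S) (hAB : Disjoint A B) (hSB : Disjoint S B)
    (hA : 3 * A.card ≤ 2 * Fintype.card V)
    (hB : 3 * B.card ≤ 2 * Fintype.card V)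
    (hS : S.card ≤ s)
    (hsep : ∀ a ∈ A, ∀ b ∈ B, ¬G.Adj a b) :
    (Fintype.card V : ℝ) ≤
      3 / 2 * Real.sqrt s * Δ * ((Δ : ℝ) - 1) ^ (ℓ - 1) + 3 * s * mooreBound Δ (ℓ - 1) := by
  have hΔ1 : 1 ≤ Δ := by omega
  set n := Fintype.card V with hn
  have hdisj : Disjoint (A ∪ S) B := Finset.disjoint_union_left.mpr ⟨hAB, hSB⟩
  have hpart : A.card + S.card + B.card = n := by
    rw [← Finset.card_union_of_disjoint hAS, ← Finset.card_union_of_disjoint hdisj, hcover,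
      Finset.card_univ]
  have hM1 : 1 ≤ mooreBound Δ (ℓ - 1) := Nat.le_add_right 1 _
  have hdistbd : ∀ u v : V, G.dist u v ≤ 2 * ℓ := fun u v => hk ▸ hdiam u v
  rcases Nat.eq_zero_or_pos ℓ with hl0 | hl1
  · -- ℓ = 0 : at most one vertex, which must be in S
    have hone : ∀ u v : V, u = v := fun u v =>
      (hconn.dist_eq_zero_iff).mp (Nat.le_zero.mp (by simpa [hl0] using hdistbd u v))
    have hn1 : n ≤ 1 := Fintype.card_le_one_iff.mpr hone
    apply conclude0 hΔ
    rcases Nat.eq_zero_or_pos n with h0 | hpos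
    · omega
    · have hs1 : 1 ≤ S.card := by omega
      have hs2 : 1 ≤ s := le_trans hs1 hS
      have := Nat.mul_le_mul (by omega : 3 * 1 ≤ 3 * s) hM1
      omega
  · -- main case : ℓ ≥ 1
    set M := mooreBound Δ (ℓ - 1) with hM
    -- the near set : vertices within distance ℓ-1 of S
    have hNrcard : (Finset.univ.filter (fun v => ∃ x ∈ S, G.dist x v ≤ ℓ - 1)).card ≤ s * M := by
      have hsub : (Finset.univ.filter (fun v => ∃ x ∈ S, G.dist x v ≤ ℓ - 1)) ⊆
          S.biUnion (fun x => Finset.univ.filter (fun v => G.dist x v ≤ ℓ - 1)) := by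
        intro v hv
        simp only [Finset.mem_filter, Finset.mem_univ, true_and] at hv
        obtain ⟨x, hxS, hxv⟩ := hv
        exact Finset.mem_biUnion.mpr ⟨x, hxS,
          Finset.mem_filter.mpr ⟨Finset.mem_univ _, hxv⟩⟩
      calc _ ≤ _ := Finset.card_le_card hsub
      _ ≤ ∑ x ∈ S, (Finset.univ.filter (fun v => G.dist x v ≤ ℓ - 1)).card :=
          Finset.card_biUnion_le
      _ ≤ ∑ _x ∈ S, M := Finset.sum_le_sum (fun x _ => ball_card hconn hmax x (ℓ - 1))
      _ = S.card * M := by rw [Finset.sum_const, smul_eq_mul]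
      _ ≤ s * M := Nat.mul_le_mul_right _ hS
    set Al := A.filter (fun a => ∀ x ∈ S, ℓ ≤ G.dist x a) with hAldef
    set Bl := B.filter (fun b => ∀ x ∈ S, ℓ ≤ G.dist x b) with hBldef
    have hAcount : A.card + S.card ≤ s * M + Al.card := by
      have hsub : A ∪ S ⊆
          (Finset.univ.filter (fun v => ∃ x ∈ S, G.dist x v ≤ ℓ - 1)) ∪ Al := by
        intro v hv
        rcases Finset.mem_union.mp hv with hv | hv
        · by_cases hin : ∀ x ∈ S, ℓ ≤ G.dist x v
          · exact Finset.mem_union_right _ (Finset.mem_filter.mpr ⟨hv, hin⟩)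
          · push_neg at hin
            obtain ⟨x, hxS, hxd⟩ := hin
            exact Finset.mem_union_left _ (Finset.mem_filter.mpr
              ⟨Finset.mem_univ _, ⟨x, hxS, by omega⟩⟩)
        · exact Finset.mem_union_left _ (Finset.mem_filter.mpr
            ⟨Finset.mem_univ _, ⟨v, hv, by simp [SimpleGraph.dist_self]⟩⟩)
      calc A.card + S.card = (A ∪ S).card := (Finset.card_union_of_disjoint hAS).symm
      _ ≤ _ := Finset.card_le_card hsub
      _ ≤ _ + Al.card := Finset.card_union_le _ _
      _ ≤ s * M + Al.card := by omega
    have hBcount : B.card + S.card ≤ s * M + Bl.card := by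
      have hsub : B ∪ S ⊆
          (Finset.univ.filter (fun v => ∃ x ∈ S, G.dist x v ≤ ℓ - 1)) ∪ Bl := by
        intro v hv
        rcases Finset.mem_union.mp hv with hv | hv
        · by_cases hin : ∀ x ∈ S, ℓ ≤ G.dist x v
          · exact Finset.mem_union_right _ (Finset.mem_filter.mpr ⟨hv, hin⟩)
          · push_neg at hin
            obtain ⟨x, hxS, hxd⟩ := hin
            exact Finset.mem_union_left _ (Finset.mem_filter.mpr
              ⟨Finset.mem_univ _, ⟨x, hxS, by omega⟩⟩)
        · exact Finset.mem_union_left _ (Finset.mem_filter.mpr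
            ⟨Finset.mem_univ _, ⟨v, hv, by simp [SimpleGraph.dist_self]⟩⟩)
      calc B.card + S.card = (B ∪ S).card := (Finset.card_union_of_disjoint hSB.symm).symm
      _ ≤ _ := Finset.card_le_card hsub
      _ ≤ _ + Bl.card := Finset.card_union_le _ _
      _ ≤ s * M + Bl.card := by omega
    by_cases hAe : Al = ∅
    · apply conclude0 hΔ
      have h1 : A.card + S.card ≤ s * M := by
        have := hAcount; rw [hAe] at this; simpa using this
      have h2 : 3 * (A.card + S.card) ≤ 3 * (s * M) := by omega
      have h3 : 3 * s * mooreBound Δ (ℓ - 1) = 3 * (s * M) := by rw [← hM]; ring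
      omega
    by_cases hBe : Bl = ∅
    · apply conclude0 hΔ
      have h1 : B.card + S.card ≤ s * M := by
        have := hBcount; rw [hBe] at this; simpa using this
      have h2 : 3 * (B.card + S.card) ≤ 3 * (s * M) := by omega
      have h3 : 3 * s * mooreBound Δ (ℓ - 1) = 3 * (s * M) := by rw [← hM]; ring
      omega
    -- both Al and Bl nonempty
    set D := Δ * (Δ - 1) ^ (ℓ - 1) with hDdef
    -- per-separator-vertex spheres and their "first-step" neighbours
    have hSA : ∀ (C : Finset V) (y : V),
        ((C.filter (fun v => ∀ x ∈ S, ℓ ≤ G.dist x v)).filter (fun a => G.dist y a = ℓ)).card ≤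
        ((nbr G y).filter (fun u => ∃ a ∈ C.filter (fun v => ∀ x ∈ S, ℓ ≤ G.dist x v),
          G.dist y a = ℓ ∧ G.dist u a = ℓ - 1)).card * (Δ - 1) ^ (ℓ - 1) := by
      intro C y
      set Cl := C.filter (fun v => ∀ x ∈ S, ℓ ≤ G.dist x v) with hCl
      set NC := (nbr G y).filter (fun u => ∃ a ∈ Cl, G.dist y a = ℓ ∧ G.dist u a = ℓ - 1)
        with hNC
      have hsub : Cl.filter (fun a => G.dist y a = ℓ) ⊆
          NC.biUnion (fun u => Finset.univ.filter
            (fun x => G.dist u x = ℓ - 1 ∧ G.dist y x = (ℓ - 1) + 1)) := by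
        intro a ha
        obtain ⟨haC, hda⟩ := Finset.mem_filter.mp ha
        obtain ⟨u, hyu, hua⟩ := exists_adj_dist hconn
          (show G.dist y a = (ℓ - 1) + 1 by omega)
        refine Finset.mem_biUnion.mpr ⟨u, ?_, ?_⟩
        · exact Finset.mem_filter.mpr ⟨mem_nbr.mpr hyu, ⟨a, haC, hda, hua⟩⟩
        · exact Finset.mem_filter.mpr ⟨Finset.mem_univ _, hua, by omega⟩
      calc _ ≤ _ := Finset.card_le_card hsub
      _ ≤ ∑ u ∈ NC, (Finset.univ.filter
            (fun x => G.dist u x = ℓ - 1 ∧ G.dist y x = (ℓ - 1) + 1)).card :=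
          Finset.card_biUnion_le
      _ ≤ ∑ _u ∈ NC, (Δ - 1) ^ (ℓ - 1) := Finset.sum_le_sum (fun u hu =>
          sphere2_card hconn hmax (mem_nbr.mp (Finset.mem_filter.mp hu).1) (ℓ - 1))
      _ = NC.card * (Δ - 1) ^ (ℓ - 1) := by rw [Finset.sum_const, smul_eq_mul]
    -- the two neighbour sets are disjoint, so their sizes sum to at most Δ
    have hNAB : ∀ y : V,
        ((nbr G y).filter (fun u => ∃ a ∈ Al, G.dist y a = ℓ ∧ G.dist u a = ℓ - 1)).card +
        ((nbr G y).filter (fun u => ∃ b ∈ Bl, G.dist y b = ℓ ∧ G.dist u b = ℓ - 1)).card ≤ Δ := by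
      intro y
      have hdisj2 : Disjoint
          ((nbr G y).filter (fun u => ∃ a ∈ Al, G.dist y a = ℓ ∧ G.dist u a = ℓ - 1))
          ((nbr G y).filter (fun u => ∃ b ∈ Bl, G.dist y b = ℓ ∧ G.dist u b = ℓ - 1)) := by
        rw [Finset.disjoint_left]
        intro u huA huB
        obtain ⟨-, a, haAl, hya, hua⟩ := Finset.mem_filter.mp huA
        obtain ⟨-, b, hbBl, hyb, hub⟩ := Finset.mem_filter.mp huB
        obtain ⟨haA, haS⟩ := Finset.mem_filter.mp haAl
        obtain ⟨hbB, hbS⟩ := Finset.mem_filter.mp hbBl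
        obtain ⟨p, hp⟩ := (hconn a b).exists_walk_length_eq_dist
        obtain ⟨x, hxS, hx⟩ := crossing hconn hcover hAB hsep p haA hbB
        rw [hp] at hx
        have hd1 : G.dist a b ≤ G.dist a u + G.dist u b := hconn.dist_triangle
        have hau : G.dist a u = ℓ - 1 := by rw [SimpleGraph.dist_comm]; exact hua
        have h1 : ℓ ≤ G.dist x a := haS x hxS
        have h2 : ℓ ≤ G.dist x b := hbS x hxS
        have h3 : G.dist a x = G.dist x a := SimpleGraph.dist_comm
        omega
      calc _ = (((nbr G y).filter (fun u => ∃ a ∈ Al, G.dist y a = ℓ ∧ G.dist u a = ℓ - 1)) ∪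
            ((nbr G y).filter (fun u => ∃ b ∈ Bl, G.dist y b = ℓ ∧ G.dist u b = ℓ - 1))).card :=
          (Finset.card_union_of_disjoint hdisj2).symm
      _ ≤ (nbr G y).card := Finset.card_le_card (Finset.union_subset
          (Finset.filter_subset _ _) (Finset.filter_subset _ _))
      _ ≤ Δ := nbr_card_le hmax y
    -- pair covering
    have hpairs : Al.card * Bl.card ≤
        ∑ y ∈ S, (Al.filter (fun a => G.dist y a = ℓ)).card *
          (Bl.filter (fun b => G.dist y b = ℓ)).card := by
      have hsub : Al ×ˢ Bl ⊆ S.biUnion (fun y =>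
          (Al.filter (fun a => G.dist y a = ℓ)) ×ˢ (Bl.filter (fun b => G.dist y b = ℓ))) := by
        rintro ⟨a, b⟩ hab
        obtain ⟨ha, hb⟩ := Finset.mem_product.mp hab
        have ha' : a ∈ Al := ha
        have hb' : b ∈ Bl := hb
        obtain ⟨haA, haS⟩ := Finset.mem_filter.mp ha'
        obtain ⟨hbB, hbS⟩ := Finset.mem_filter.mp hb'
        obtain ⟨p, hp⟩ := (hconn a b).exists_walk_length_eq_dist
        obtain ⟨x, hxS, hx⟩ := crossing hconn hcover hAB hsep p haA hbB
        rw [hp] at hx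
        have h1 : ℓ ≤ G.dist x a := haS x hxS
        have h2 : ℓ ≤ G.dist x b := hbS x hxS
        have h3 : G.dist a b ≤ 2 * ℓ := hdistbd a b
        have h4 : G.dist a x = G.dist x a := SimpleGraph.dist_comm
        refine Finset.mem_biUnion.mpr ⟨x, hxS, Finset.mem_product.mpr ⟨?_, ?_⟩⟩
        · exact Finset.mem_filter.mpr ⟨ha', show G.dist x a = ℓ by omega⟩
        · exact Finset.mem_filter.mpr ⟨hb', show G.dist x b = ℓ by omega⟩
      calc Al.card * Bl.card = (Al ×ˢ Bl).card := (Finset.card_product _ _).symm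
      _ ≤ _ := Finset.card_le_card hsub
      _ ≤ ∑ y ∈ S, ((Al.filter (fun a => G.dist y a = ℓ)) ×ˢ
            (Bl.filter (fun b => G.dist y b = ℓ))).card := Finset.card_biUnion_le
      _ = _ := by simp [Finset.card_product]
    -- the key quadratic bound
    have hkey : 4 * (Al.card * Bl.card) ≤ s * D ^ 2 := by
      have hpt : ∀ y ∈ S, 4 * ((Al.filter (fun a => G.dist y a = ℓ)).card *
          (Bl.filter (fun b => G.dist y b = ℓ)).card) ≤ Δ ^ 2 * ((Δ - 1) ^ (ℓ - 1)) ^ 2 := by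
        intro y _
        have h1 := hSA A y
        have h2 := hSA B y
        rw [← hAldef] at h1
        rw [← hBldef] at h2
        set na := ((nbr G y).filter
          (fun u => ∃ a ∈ Al, G.dist y a = ℓ ∧ G.dist u a = ℓ - 1)).card
        set nb := ((nbr G y).filter
          (fun u => ∃ b ∈ Bl, G.dist y b = ℓ ∧ G.dist u b = ℓ - 1)).card
        have h3 : na + nb ≤ Δ := hNAB y
        have h4 : 4 * (na * nb) ≤ Δ ^ 2 := by
          calc 4 * (na * nb) = 4 * na * nb := by ring
          _ ≤ (na + nb) ^ 2 := four_mul_le_sq_add na nb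
          _ ≤ Δ ^ 2 := Nat.pow_le_pow_left h3 2
        calc 4 * ((Al.filter (fun a => G.dist y a = ℓ)).card *
            (Bl.filter (fun b => G.dist y b = ℓ)).card) ≤
            4 * ((na * (Δ - 1) ^ (ℓ - 1)) * (nb * (Δ - 1) ^ (ℓ - 1))) := by
              exact Nat.mul_le_mul_left _ (Nat.mul_le_mul h1 h2)
        _ = (4 * (na * nb)) * ((Δ - 1) ^ (ℓ - 1)) ^ 2 := by ring
        _ ≤ Δ ^ 2 * ((Δ - 1) ^ (ℓ - 1)) ^ 2 := Nat.mul_le_mul_right _ h4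
      calc 4 * (Al.card * Bl.card) ≤ 4 * ∑ y ∈ S, (Al.filter (fun a => G.dist y a = ℓ)).card *
            (Bl.filter (fun b => G.dist y b = ℓ)).card := Nat.mul_le_mul_left _ hpairs
      _ = ∑ y ∈ S, 4 * ((Al.filter (fun a => G.dist y a = ℓ)).card *
            (Bl.filter (fun b => G.dist y b = ℓ)).card) := by rw [Finset.mul_sum]
      _ ≤ ∑ _y ∈ S, Δ ^ 2 * ((Δ - 1) ^ (ℓ - 1)) ^ 2 := Finset.sum_le_sum hpt
      _ = S.card * (Δ ^ 2 * ((Δ - 1) ^ (ℓ - 1)) ^ 2) := by rw [Finset.sum_const, smul_eq_mul]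
      _ ≤ s * (Δ ^ 2 * ((Δ - 1) ^ (ℓ - 1)) ^ 2) := Nat.mul_le_mul_right _ hS
      _ = s * D ^ 2 := by rw [hDdef]; ring
    -- finish with the smaller of the two sides
    rcases le_total Al.card Bl.card with hm | hm
    · apply conclude1 (m := Al.card) hΔ
      · have h1 : n ≤ 3 * (A.card + S.card) := by omega
        have h2 : 3 * (A.card + S.card) ≤ 3 * (s * M + Al.card) := by omega
        have h3 : 3 * s * mooreBound Δ (ℓ - 1) = 3 * (s * M) := by rw [← hM]; ring
        omega
      · calc 4 * Al.card ^ 2 ≤ 4 * (Al.card * Bl.card) := by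
              have := Nat.mul_le_mul_left Al.card hm
              nlinarith
        _ ≤ s * D ^ 2 := hkey
    · apply conclude1 (m := Bl.card) hΔ
      · have h1 : n ≤ 3 * (B.card + S.card) := by omega
        have h2 : 3 * (B.card + S.card) ≤ 3 * (s * M + Bl.card) := by omega
        have h3 : 3 * s * mooreBound Δ (ℓ - 1) = 3 * (s * M) := by rw [← hM]; ring
        omega
      · calc 4 * Bl.card ^ 2 ≤ 4 * (Al.card * Bl.card) := by nlinarith
        _ ≤ s * D ^ 2 := hkey
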